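/- arXiv:0812.2811 — 7 statements merged into one kernel-verified Lean document; each statement's English description precedes it below -/
import Mathlib

section
/- Let ε > 0 and suppose S ∈ L²(-1,1), T, U ∈ W^{1,2}_0(-1,1). Define c₁ := (∫_{-1}^1 e^{4U}(1+ε−x²) dx)^{1/2}, c₂ := ∫_{-1}^1 S T dx, c₃ := (1/√2)∫_{-1}^1 S dx, M₁ := max{0, 4 − c₃⁴}, M₂ := max{0, (√M₁ − 2|c₂|)/c₁}, and I_ε[S,T,U] := (1/2)∫_{-1}^1 [U'²(1+ε−x²) − 2xU' + (S² + T'²)e^{-2U}] dx + M₂²/2. Then I_ε[S,T,U] ≥ −(1/2)∫_{-1}^1 x²/(1+ε−x²) dx; in particular I_ε is bounded below on L²×W^{1,2}_0×W^{1,2}_0. -/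
open Real Set MeasureTheory intervalIntegral

/-! Completing the square, `a u² - 2xu = (a u - x)² / a - x² / a` with `a = 1 + ε - x² > 0`,
bounds the `U`-part of the integrand below by `-x² / (1 + ε - x²)`; the remaining terms
`(S² + T'²) e^{-2U}` and `M₂² / 2` are nonnegative. -/

lemma neg_div_le_sq_mul_sub {a : ℝ} (ha : 0 < a) (x u : ℝ) :
    -(x ^ 2 / a) ≤ u ^ 2 * a - 2 * x * u := by
  rw [neg_le, neg_sub, le_div_iff₀ ha]
  nlinarith [sq_nonneg (u * a - x)]

/-- If `f` is not integrable its integral is the junk value `0`, which still dominates `-∫ h`. -/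
lemma neg_integral_le_integral_of_neg_le {f h : ℝ → ℝ} {a b : ℝ} (hab : a ≤ b)
    (hh : IntervalIntegrable h volume a b) (hh₀ : ∀ x ∈ Icc a b, 0 ≤ h x)
    (hhf : ∀ x ∈ Icc a b, -h x ≤ f x) :
    -∫ x in a..b, h x ≤ ∫ x in a..b, f x := by
  by_cases hf : IntervalIntegrable f volume a b
  · rw [← intervalIntegral.integral_neg]
    exact integral_mono_on hab hh.neg hf hhf
  · rw [integral_undef hf, neg_nonpos]
    exact integral_nonneg hab hh₀

theorem stmt_2_general (ε : ℝ) (hε : 0 < ε) (S T' U U' : ℝ → ℝ)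
    (M₂ Iε : ℝ)
    (hIε : Iε = (1/2) * (∫ x in (-1:ℝ)..1,
        ((U' x)^2 * (1 + ε - x^2) - 2 * x * U' x
          + ((S x)^2 + (T' x)^2) * Real.exp (-2 * U x))) + M₂^2 / 2) :
    Iε ≥ -(1/2) * ∫ x in (-1:ℝ)..1, x^2 / (1 + ε - x^2) := by
  have hpos : ∀ x ∈ Icc (-1:ℝ) 1, 0 < 1 + ε - x ^ 2 := fun x hx => by
    nlinarith [hx.1, hx.2]
  have hint : IntervalIntegrable (fun x => x ^ 2 / (1 + ε - x ^ 2)) volume (-1) 1 := by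
    refine ContinuousOn.intervalIntegrable (ContinuousOn.div (by fun_prop) (by fun_prop) ?_)
    rw [uIcc_of_le (by norm_num)]
    exact fun x hx => (hpos x hx).ne'
  have hpointwise : ∀ x ∈ Icc (-1:ℝ) 1, -(x ^ 2 / (1 + ε - x ^ 2)) ≤
      (U' x)^2 * (1 + ε - x^2) - 2 * x * U' x + ((S x)^2 + (T' x)^2) * Real.exp (-2 * U x) :=
    fun x hx => le_add_of_le_of_nonneg (neg_div_le_sq_mul_sub (hpos x hx) x (U' x))
      (by positivity)
  have hbound := neg_integral_le_integral_of_neg_le (by norm_num) hint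
    (fun x hx => div_nonneg (sq_nonneg x) (hpos x hx).le) hpointwise
  rw [hIε]
  nlinarith [sq_nonneg M₂]

/-- With `S ∈ L²(-1,1)`, `T, U ∈ W^{1,2}_0(-1,1)` and the auxiliary
quantities c₁, c₂, c₃, M₁, M₂ of the paper, the functional I_ε is bounded below by
−(1/2)∫_{-1}^1 x²/(1+ε−x²) dx. -/
theorem stmt_2 (ε : ℝ) (hε : 0 < ε) (S T T' U U' : ℝ → ℝ)
    (hS : IntervalIntegrable (fun x => (S x)^2) volume (-1) 1)
    (hT : ∀ x ∈ Icc (-1:ℝ) 1, HasDerivAt T (T' x) x)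
    (hT' : IntervalIntegrable (fun x => (T' x)^2) volume (-1) 1)
    (hTb : T (-1) = 0 ∧ T 1 = 0)
    (hU : ∀ x ∈ Icc (-1:ℝ) 1, HasDerivAt U (U' x) x)
    (hU' : IntervalIntegrable (fun x => (U' x)^2) volume (-1) 1)
    (hUb : U (-1) = 0 ∧ U 1 = 0)
    (c₁ c₂ c₃ M₁ M₂ Iε : ℝ)
    (hc₁ : c₁ = Real.sqrt (∫ x in (-1:ℝ)..1, Real.exp (4 * U x) * (1 + ε - x^2)))
    (hc₂ : c₂ = ∫ x in (-1:ℝ)..1, S x * T x)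
    (hc₃ : c₃ = (1 / Real.sqrt 2) * ∫ x in (-1:ℝ)..1, S x)
    (hM₁ : M₁ = max 0 (4 - c₃^4))
    (hM₂ : M₂ = max 0 ((Real.sqrt M₁ - 2 * |c₂|) / c₁))
    (hIε : Iε = (1/2) * (∫ x in (-1:ℝ)..1,
        ((U' x)^2 * (1 + ε - x^2) - 2 * x * U' x
          + ((S x)^2 + (T' x)^2) * Real.exp (-2 * U x))) + M₂^2 / 2) :
    Iε ≥ -(1/2) * ∫ x in (-1:ℝ)..1, x^2 / (1 + ε - x^2) :=
  stmt_2_general ε hε S T' U U' M₂ Iε hIε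
end

section
/- Let S ∈ L²(-1,1), T, U continuous on [−1,1], V measurable with ∫_{-1}^1 V²(1−x²)dx < ∞. Set c₁ := (∫_{-1}^1 e^{4U}(1−x²)dx)^{1/2} > 0, c₂ := ∫_{-1}^1 ST dx, c₃ := (1/√2)∫_{-1}^1 S dx, M₁ := max{0, 4−c₃⁴}, M₂ := max{0, (√M₁ − 2|c₂|)/c₁}. If (∫_{-1}^1 [V e^{2U}(1−x²) − 2ST] dx)² + (1/4)(∫_{-1}^1 S dx)⁴ ≥ 4, then ∫_{-1}^1 V²(1−x²) dx ≥ M₂². -/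
open Real Set MeasureTheory intervalIntegral

/-!
Cauchy–Schwarz for the weight `1 - x²` on `[-1, 1]` gives
`|∫ V e^{2U} (1 - x²)| ≤ c₁ (∫ V² (1 - x²))^{1/2}`, hence
`√M₁ ≤ |∫ (V e^{2U} (1 - x²) - 2 S T)| ≤ c₁ (∫ V² (1 - x²))^{1/2} + 2 |c₂|`,
which rearranges to the claim. No integrability of `S T` is needed: if it fails, the integral of
the difference is `0` by convention and the middle bound holds trivially.
-/
section WeightedCauchySchwarz

variable {α : Type*} [MeasurableSpace α] {μ : Measure α} {f g w : α → ℝ}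

theorem abs_integral_mul_le_sqrt_mul_sqrt (hf : MemLp f 2 μ) (hg : MemLp g 2 μ) :
    |∫ x, f x * g x ∂μ| ≤ √(∫ x, f x ^ 2 ∂μ) * √(∫ x, g x ^ 2 ∂μ) := by
  have hf' : MemLp f (ENNReal.ofReal 2) μ := by simpa using hf
  have hg' : MemLp g (ENNReal.ofReal 2) μ := by simpa using hg
  calc |∫ x, f x * g x ∂μ| ≤ ∫ x, ‖f x‖ * ‖g x‖ ∂μ := by
        simpa only [Real.norm_eq_abs, abs_mul] using
          MeasureTheory.abs_integral_le_integral_abs (f := fun x => f x * g x) (μ := μ)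
    _ ≤ (∫ x, ‖f x‖ ^ (2 : ℝ) ∂μ) ^ (1 / 2 : ℝ) * (∫ x, ‖g x‖ ^ (2 : ℝ) ∂μ) ^ (1 / 2 : ℝ) :=
        integral_mul_norm_le_Lp_mul_Lq Real.HolderConjugate.two_two hf' hg'
    _ = √(∫ x, f x ^ 2 ∂μ) * √(∫ x, g x ^ 2 ∂μ) := by
        simp only [Real.rpow_two, Real.norm_eq_abs, sq_abs, ← Real.sqrt_eq_rpow]

theorem memLp_two_mul_sqrt (hf : AEStronglyMeasurable f μ) (hw : AEStronglyMeasurable w μ)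
    (hw₀ : 0 ≤ᵐ[μ] w) (hfw : Integrable (fun x => f x ^ 2 * w x) μ) :
    MemLp (fun x => f x * √(w x)) 2 μ := by
  refine (memLp_two_iff_integrable_sq
    (hf.mul (continuous_sqrt.comp_aestronglyMeasurable hw))).2 (hfw.congr ?_)
  filter_upwards [hw₀] with x hx
  rw [Pi.mul_apply, mul_pow, sq_sqrt hx]

theorem mul_sqrt_mul_mul_sqrt_ae_eq (hw₀ : 0 ≤ᵐ[μ] w) :
    (fun x => f x * √(w x) * (g x * √(w x))) =ᵐ[μ] fun x => f x * g x * w x := by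
  filter_upwards [hw₀] with x hx
  rw [mul_mul_mul_comm, mul_self_sqrt hx]

theorem integrable_mul_mul_of_integrable_sq_mul (hf : AEStronglyMeasurable f μ)
    (hg : AEStronglyMeasurable g μ) (hw : AEStronglyMeasurable w μ) (hw₀ : 0 ≤ᵐ[μ] w)
    (hfw : Integrable (fun x => f x ^ 2 * w x) μ) (hgw : Integrable (fun x => g x ^ 2 * w x) μ) :
    Integrable (fun x => f x * g x * w x) μ :=
  ((memLp_two_mul_sqrt hf hw hw₀ hfw).integrable_mul (memLp_two_mul_sqrt hg hw hw₀ hgw)).congr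
    (mul_sqrt_mul_mul_sqrt_ae_eq hw₀)

theorem abs_integral_mul_mul_le_of_integrable_sq_mul (hf : AEStronglyMeasurable f μ)
    (hg : AEStronglyMeasurable g μ) (hw : AEStronglyMeasurable w μ) (hw₀ : 0 ≤ᵐ[μ] w)
    (hfw : Integrable (fun x => f x ^ 2 * w x) μ) (hgw : Integrable (fun x => g x ^ 2 * w x) μ) :
    |∫ x, f x * g x * w x ∂μ| ≤ √(∫ x, f x ^ 2 * w x ∂μ) * √(∫ x, g x ^ 2 * w x ∂μ) := by
  have h := abs_integral_mul_le_sqrt_mul_sqrt (memLp_two_mul_sqrt hf hw hw₀ hfw)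
    (memLp_two_mul_sqrt hg hw hw₀ hgw)
  have hsq : ∀ {h : α → ℝ}, (fun x => (h x * √(w x)) ^ 2) =ᵐ[μ] fun x => h x ^ 2 * w x := by
    intro h
    filter_upwards [hw₀] with x hx
    rw [mul_pow, sq_sqrt hx]
  rwa [integral_congr_ae (mul_sqrt_mul_mul_sqrt_ae_eq hw₀), integral_congr_ae hsq,
    integral_congr_ae hsq] at h

end WeightedCauchySchwarz

theorem norm_intervalIntegral_sub_le {E : Type*} [NormedAddCommGroup E] [NormedSpace ℝ E]
    {μ : Measure ℝ} {a b : ℝ} {f g : ℝ → E} (hf : IntervalIntegrable f μ a b) :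
    ‖∫ x in a..b, f x - g x ∂μ‖ ≤ ‖∫ x in a..b, f x ∂μ‖ + ‖∫ x in a..b, g x ∂μ‖ := by
  by_cases hg : IntervalIntegrable g μ a b
  · rw [integral_sub hf hg]
    exact norm_sub_le _ _
  · have hfg : ¬IntervalIntegrable (fun x => f x - g x) μ a b := fun hfg =>
      hg (by simpa using hf.sub hfg)
    rw [integral_undef hfg, norm_zero]
    positivity

section IntervalWeightedCauchySchwarz

variable {a b : ℝ} {f g w : ℝ → ℝ}

theorem intervalIntegrable_mul_mul_of_sq_mul (hab : a ≤ b)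
    (hf : AEStronglyMeasurable f (volume.restrict (Ioc a b)))
    (hg : AEStronglyMeasurable g (volume.restrict (Ioc a b)))
    (hw : AEStronglyMeasurable w (volume.restrict (Ioc a b))) (hw₀ : ∀ x ∈ Ioc a b, 0 ≤ w x)
    (hfw : IntervalIntegrable (fun x => f x ^ 2 * w x) volume a b)
    (hgw : IntervalIntegrable (fun x => g x ^ 2 * w x) volume a b) :
    IntervalIntegrable (fun x => f x * g x * w x) volume a b := by
  rw [intervalIntegrable_iff_integrableOn_Ioc_of_le hab] at hfw hgw ⊢
  exact integrable_mul_mul_of_integrable_sq_mul hf hg hw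
    ((ae_restrict_mem measurableSet_Ioc).mono hw₀) hfw hgw

theorem abs_intervalIntegral_mul_mul_le_of_sq_mul (hab : a ≤ b)
    (hf : AEStronglyMeasurable f (volume.restrict (Ioc a b)))
    (hg : AEStronglyMeasurable g (volume.restrict (Ioc a b)))
    (hw : AEStronglyMeasurable w (volume.restrict (Ioc a b))) (hw₀ : ∀ x ∈ Ioc a b, 0 ≤ w x)
    (hfw : IntervalIntegrable (fun x => f x ^ 2 * w x) volume a b)
    (hgw : IntervalIntegrable (fun x => g x ^ 2 * w x) volume a b) :
    |∫ x in a..b, f x * g x * w x| ≤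
      √(∫ x in a..b, f x ^ 2 * w x) * √(∫ x in a..b, g x ^ 2 * w x) := by
  rw [intervalIntegrable_iff_integrableOn_Ioc_of_le hab] at hfw hgw
  simp only [integral_of_le hab]
  exact abs_integral_mul_mul_le_of_integrable_sq_mul hf hg hw
    ((ae_restrict_mem measurableSet_Ioc).mono hw₀) hfw hgw

end IntervalWeightedCauchySchwarz

theorem intervalIntegrable_and_abs_integral_mul_exp_mul_one_sub_sq_le {U V : ℝ → ℝ}
    (hU : ContinuousOn U (Icc (-1:ℝ) 1)) (hV : Measurable V)
    (hV2 : IntervalIntegrable (fun x => V x ^ 2 * (1 - x ^ 2)) volume (-1) 1) :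
    IntervalIntegrable (fun x => V x * exp (2 * U x) * (1 - x ^ 2)) volume (-1) 1 ∧
      |∫ x in (-1:ℝ)..1, V x * exp (2 * U x) * (1 - x ^ 2)| ≤
        √(∫ x in (-1:ℝ)..1, V x ^ 2 * (1 - x ^ 2)) *
          √(∫ x in (-1:ℝ)..1, exp (4 * U x) * (1 - x ^ 2)) := by
  have hab : (-1 : ℝ) ≤ 1 := by norm_num
  have hw₀ : ∀ x ∈ Ioc (-1 : ℝ) 1, 0 ≤ 1 - x ^ 2 := fun x hx => by nlinarith [hx.1, hx.2]
  have hexp : (fun x => exp (2 * U x) ^ 2 * (1 - x ^ 2)) = fun x => exp (4 * U x) * (1 - x ^ 2) := by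
    funext x; rw [← exp_nat_mul]; ring_nf
  have hUint : IntervalIntegrable (fun x => exp (2 * U x) ^ 2 * (1 - x ^ 2)) volume (-1) 1 := by
    refine ContinuousOn.intervalIntegrable ?_
    rw [uIcc_of_le hab]
    fun_prop
  have hV' := hV.aestronglyMeasurable (μ := volume.restrict (Ioc (-1 : ℝ) 1))
  have hU' : AEStronglyMeasurable (fun x => exp (2 * U x)) (volume.restrict (Ioc (-1 : ℝ) 1)) :=
    ContinuousOn.aestronglyMeasurable (continuousOn_const.mul (hU.mono Ioc_subset_Icc_self)).rexp
      measurableSet_Ioc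
  refine ⟨intervalIntegrable_mul_mul_of_sq_mul hab hV' hU' (by fun_prop) hw₀ hV2 hUint, ?_⟩
  rw [← hexp]
  exact abs_intervalIntegral_mul_mul_le_of_sq_mul hab hV' hU' (by fun_prop) hw₀ hV2 hUint

theorem stmt_4_general (S T U V : ℝ → ℝ)
    (hU : ContinuousOn U (Icc (-1:ℝ) 1))
    (hVmeas : Measurable V)
    (hV2 : IntervalIntegrable (fun x => (V x)^2 * (1 - x^2)) volume (-1) 1)
    (c₁ c₂ c₃ M₁ M₂ : ℝ)
    (hc₁ : c₁ = Real.sqrt (∫ x in (-1:ℝ)..1, Real.exp (4 * U x) * (1 - x^2)))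
    (hc₁pos : 0 < c₁)
    (hc₂ : c₂ = ∫ x in (-1:ℝ)..1, S x * T x)
    (hc₃ : c₃ = (1 / Real.sqrt 2) * ∫ x in (-1:ℝ)..1, S x)
    (hM₁ : M₁ = max 0 (4 - c₃^4))
    (hM₂ : M₂ = max 0 ((Real.sqrt M₁ - 2 * |c₂|) / c₁))
    (hyp : (∫ x in (-1:ℝ)..1, (V x * Real.exp (2 * U x) * (1 - x^2) - 2 * S x * T x))^2
        + (1/4) * (∫ x in (-1:ℝ)..1, S x)^4 ≥ 4) :
    (∫ x in (-1:ℝ)..1, (V x)^2 * (1 - x^2)) ≥ M₂^2 := by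
  set I := ∫ x in (-1:ℝ)..1, (V x)^2 * (1 - x^2)
  set B := ∫ x in (-1:ℝ)..1, (V x * Real.exp (2 * U x) * (1 - x^2) - 2 * S x * T x)
  have hI : 0 ≤ I := integral_nonneg (by norm_num) fun x hx =>
    mul_nonneg (sq_nonneg _) (by nlinarith [hx.1, hx.2])
  obtain ⟨hA_int, hA⟩ :=
    intervalIntegrable_and_abs_integral_mul_exp_mul_one_sub_sq_le hU hVmeas hV2
  have hST : ∫ x in (-1:ℝ)..1, 2 * S x * T x = 2 * c₂ := by
    simp only [mul_assoc, intervalIntegral.integral_const_mul, hc₂]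
  have hB : |B| ≤ c₁ * √I + 2 * |c₂| := by
    calc |B| ≤ |∫ x in (-1:ℝ)..1, V x * exp (2 * U x) * (1 - x ^ 2)|
          + |∫ x in (-1:ℝ)..1, 2 * S x * T x| := norm_intervalIntegral_sub_le hA_int
      _ ≤ c₁ * √I + 2 * |c₂| := by rw [hST, abs_mul, abs_two, hc₁]; linarith
  have hc₃4 : c₃ ^ 4 = (1 / 4) * (∫ x in (-1:ℝ)..1, S x) ^ 4 := by
    rw [hc₃, mul_pow, div_pow, one_pow, show √2 ^ 4 = (√2 ^ 2) ^ 2 by ring, sq_sqrt zero_le_two]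
    norm_num
  have hM₁B : √M₁ ≤ |B| := by
    rw [← sqrt_sq_eq_abs, hM₁]
    exact sqrt_le_sqrt (max_le (sq_nonneg B) (by linarith))
  have hM₂I : M₂ ≤ √I := by
    rw [hM₂]
    exact max_le (sqrt_nonneg I) (by rw [div_le_iff₀ hc₁pos]; linarith)
  exact (le_sqrt (hM₂ ▸ le_max_left _ _) hI).1 hM₂I

/-- If (∫ [V e^{2U}(1−x²) − 2ST] dx)² + (1/4)(∫ S dx)⁴ ≥ 4, then
∫ V²(1−x²) dx ≥ M₂², with c₁, c₂, c₃, M₁, M₂ as in the paper. -/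
theorem stmt_4 (S T U V : ℝ → ℝ)
    (hS : IntervalIntegrable (fun x => (S x)^2) volume (-1) 1)
    (hT : ContinuousOn T (Icc (-1:ℝ) 1))
    (hU : ContinuousOn U (Icc (-1:ℝ) 1))
    (hVmeas : Measurable V)
    (hV2 : IntervalIntegrable (fun x => (V x)^2 * (1 - x^2)) volume (-1) 1)
    (c₁ c₂ c₃ M₁ M₂ : ℝ)
    (hc₁ : c₁ = Real.sqrt (∫ x in (-1:ℝ)..1, Real.exp (4 * U x) * (1 - x^2)))
    (hc₁pos : 0 < c₁)
    (hc₂ : c₂ = ∫ x in (-1:ℝ)..1, S x * T x)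
    (hc₃ : c₃ = (1 / Real.sqrt 2) * ∫ x in (-1:ℝ)..1, S x)
    (hM₁ : M₁ = max 0 (4 - c₃^4))
    (hM₂ : M₂ = max 0 ((Real.sqrt M₁ - 2 * |c₂|) / c₁))
    (hyp : (∫ x in (-1:ℝ)..1, (V x * Real.exp (2 * U x) * (1 - x^2) - 2 * S x * T x))^2
        + (1/4) * (∫ x in (-1:ℝ)..1, S x)^4 ≥ 4) :
    (∫ x in (-1:ℝ)..1, (V x)^2 * (1 - x^2)) ≥ M₂^2 :=
  stmt_4_general S T U V hU hVmeas hV2 c₁ c₂ c₃ M₁ M₂ hc₁ hc₁pos hc₂ hc₃ hM₁ hM₂ hyp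
end

section
/- Fix ε > 0. On the Hilbert space X = L²(-1,1) × W^{1,2}_0(-1,1) × W^{1,2}_0(-1,1) with norm ‖(S,T,U)‖² = ∫_{-1}^1 [S² + T'² + U'²(1+ε−x²)] dx, the functional I_ε (defined as in the paper) satisfies I_ε[S,T,U] ≥ (1/2)‖U‖²_ε − C(ε)‖U‖_ε for some constant C(ε) > 0 independent of (S,T,U), where ‖U‖²_ε := ∫_{-1}^1 U'²(1+ε−x²)dx. Consequently I_ε is coercive: for every P ∈ ℝ there exists Q_P such that ‖(S,T,U)‖ ≥ Q_P implies I_ε[S,T,U] ≥ P. -/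
open Real Set MeasureTheory intervalIntegral

noncomputable def c1eps (ε : ℝ) (U : ℝ → ℝ) : ℝ :=
  Real.sqrt (∫ x in (-1:ℝ)..1, Real.exp (4 * U x) * (1 + ε - x^2))

noncomputable def c2 (S T : ℝ → ℝ) : ℝ := ∫ x in (-1:ℝ)..1, S x * T x

noncomputable def c3 (S : ℝ → ℝ) : ℝ := (1 / Real.sqrt 2) * ∫ x in (-1:ℝ)..1, S x

noncomputable def M1 (S : ℝ → ℝ) : ℝ := max 0 (4 - (c3 S)^4)

noncomputable def M2eps (ε : ℝ) (S T U : ℝ → ℝ) : ℝ :=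
  max 0 ((Real.sqrt (M1 S) - 2 * |c2 S T|) / c1eps ε U)

/-- The functional I_ε of the paper (with T', U' the derivatives of T, U). -/
noncomputable def Ieps (ε : ℝ) (S T T' U U' : ℝ → ℝ) : ℝ :=
  (1/2) * (∫ x in (-1:ℝ)..1,
      ((U' x)^2 * (1 + ε - x^2) - 2 * x * U' x
        + ((S x)^2 + (T' x)^2) * Real.exp (-2 * U x)))
    + (M2eps ε S T U)^2 / 2

/-- The weighted norm ‖U‖_ε, squared: ∫ U'²(1+ε−x²) dx. -/
noncomputable def normUsq (ε : ℝ) (U' : ℝ → ℝ) : ℝ :=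
  ∫ x in (-1:ℝ)..1, (U' x)^2 * (1 + ε - x^2)

/-- The norm on X = L²×W^{1,2}_0×W^{1,2}_0: ‖(S,T,U)‖² = ∫ [S² + T'² + U'²(1+ε−x²)] dx. -/
noncomputable def normXsq (ε : ℝ) (S T' U' : ℝ → ℝ) : ℝ :=
  ∫ x in (-1:ℝ)..1, ((S x)^2 + (T' x)^2 + (U' x)^2 * (1 + ε - x^2))

/-- Membership of (S,T,U) (with weak derivatives T', U') in X. -/
def memX (S T T' U U' : ℝ → ℝ) : Prop :=
  IntervalIntegrable (fun x => (S x)^2) volume (-1) 1 ∧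
  (∀ x ∈ Icc (-1:ℝ) 1, HasDerivAt T (T' x) x) ∧
  IntervalIntegrable (fun x => (T' x)^2) volume (-1) 1 ∧
  T (-1) = 0 ∧ T 1 = 0 ∧
  (∀ x ∈ Icc (-1:ℝ) 1, HasDerivAt U (U' x) x) ∧
  IntervalIntegrable (fun x => (U' x)^2) volume (-1) 1 ∧
  U (-1) = 0 ∧ U 1 = 0

/-!
Put K = ∫ x²/(1+ε−x²) and L = ∫ 1/(1+ε−x²). Weighted Cauchy–Schwarz bounds
∫ x U' ≤ √K ‖U‖_ε and, through U(x) = ∫_{-1}^x U', also U ≤ ∫ |U'| ≤ √L ‖U‖_ε.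
Dropping M₂ᵋ² ≥ 0 therefore gives
I_ε ≥ ½‖U‖²_ε − √K ‖U‖_ε + ½ e^{−2√L ‖U‖_ε} (∫ S² + ∫ T'²),
which yields the first claim at once. For coercivity, either ‖U‖_ε is large and the first two
terms are large, or ‖U‖_ε is bounded, so the exponential weight is bounded below and
∫ S² + ∫ T'² = ‖(S,T,U)‖² − ‖U‖²_ε is large.
-/

theorem MeasureTheory.integral_mul_le_sqrt_mul_sqrt {α : Type*} [MeasurableSpace α]
    {μ : Measure α} {f g : α → ℝ} (hf : MemLp f 2 μ) (hg : MemLp g 2 μ) :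
    ∫ a, f a * g a ∂μ ≤ √(∫ a, f a ^ 2 ∂μ) * √(∫ a, g a ^ 2 ∂μ) := by
  have hHolder := integral_mul_le_Lp_mul_Lq_of_nonneg Real.HolderConjugate.two_two
    (Filter.Eventually.of_forall fun a => abs_nonneg (f a))
    (Filter.Eventually.of_forall fun a => abs_nonneg (g a))
    (by simpa [Real.norm_eq_abs] using hf.norm) (by simpa [Real.norm_eq_abs] using hg.norm)
  simp only [Real.rpow_two, sq_abs, ← Real.sqrt_eq_rpow, ← abs_mul] at hHolder
  have hfg : Integrable (fun a => f a * g a) μ := hf.integrable_mul hg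
  exact (integral_mono hfg hfg.abs fun a => le_abs_self _).trans hHolder

theorem intervalIntegral.integral_mul_le_sqrt_mul_sqrt_weighted {a b : ℝ} (hab : a ≤ b)
    {f g w : ℝ → ℝ} (hf : AEStronglyMeasurable f (volume.restrict (Ioc a b)))
    (hfw : IntervalIntegrable (fun x => f x ^ 2 * w x) volume a b)
    (hg : ContinuousOn g (Icc a b)) (hw : ContinuousOn w (Icc a b))
    (hw0 : ∀ x ∈ Icc a b, 0 < w x) :
    ∫ x in a..b, f x * g x ≤ √(∫ x in a..b, f x ^ 2 * w x) * √(∫ x in a..b, g x ^ 2 / w x) := by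
  simp only [integral_of_le hab]
  have hpos : ∀ᵐ x ∂(volume.restrict (Ioc a b)), 0 < w x :=
    (ae_restrict_mem measurableSet_Ioc).mono fun x hx => hw0 x (Ioc_subset_Icc_self hx)
  have hsqrtw : ContinuousOn (fun x => √(w x)) (Icc a b) := hw.sqrt
  have hF : MemLp (fun x => f x * √(w x)) 2 (volume.restrict (Ioc a b)) := by
    refine (memLp_two_iff_integrable_sq
      (hf.mul ((hsqrtw.mono Ioc_subset_Icc_self).aestronglyMeasurable measurableSet_Ioc))).2 ?_
    refine ((intervalIntegrable_iff_integrableOn_Ioc_of_le hab).1 hfw).congr ?_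
    filter_upwards [hpos] with x hx
    rw [Pi.mul_apply, mul_pow, sq_sqrt hx.le]
  have hG : MemLp (fun x => g x / √(w x)) 2 (volume.restrict (Ioc a b)) := by
    have hGc : ContinuousOn (fun x => g x / √(w x)) (Icc a b) :=
      hg.div hsqrtw fun x hx => (sqrt_pos.2 (hw0 x hx)).ne'
    refine (memLp_two_iff_integrable_sq
      ((hGc.mono Ioc_subset_Icc_self).aestronglyMeasurable measurableSet_Ioc)).2 ?_
    exact ((hGc.pow 2).integrableOn_Icc).mono_set Ioc_subset_Icc_self
  calc ∫ x in Ioc a b, f x * g x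
      = ∫ x in Ioc a b, f x * √(w x) * (g x / √(w x)) := by
        refine MeasureTheory.integral_congr_ae ?_
        filter_upwards [hpos] with x hx
        field_simp [(sqrt_pos.2 hx).ne']
    _ ≤ √(∫ x in Ioc a b, (f x * √(w x)) ^ 2) * √(∫ x in Ioc a b, (g x / √(w x)) ^ 2) :=
        integral_mul_le_sqrt_mul_sqrt hF hG
    _ = √(∫ x in Ioc a b, f x ^ 2 * w x) * √(∫ x in Ioc a b, g x ^ 2 / w x) := by
        congr 2 <;> refine MeasureTheory.integral_congr_ae ?_ <;> filter_upwards [hpos] with x hx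
        · rw [mul_pow, sq_sqrt hx.le]
        · rw [div_pow, sq_sqrt hx.le]

theorem aestronglyMeasurable_of_hasDerivAt {f f' : ℝ → ℝ} {s : Set ℝ} (hs : MeasurableSet s)
    (h : ∀ x ∈ s, HasDerivAt f (f' x) x) : AEStronglyMeasurable f' (volume.restrict s) :=
  (measurable_deriv f).aestronglyMeasurable.congr <|
    (ae_restrict_mem hs).mono fun x hx => (h x hx).deriv

theorem IntervalIntegrable.of_sq {f : ℝ → ℝ} {a b : ℝ} (hab : a ≤ b)
    (hf : AEStronglyMeasurable f (volume.restrict (Ioc a b)))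
    (h2 : IntervalIntegrable (fun x => f x ^ 2) volume a b) : IntervalIntegrable f volume a b :=
  (intervalIntegrable_iff_integrableOn_Ioc_of_le hab).2 <| MemLp.integrable one_le_two <|
    (memLp_two_iff_integrable_sq hf).2 ((intervalIntegrable_iff_integrableOn_Ioc_of_le hab).1 h2)

theorem le_integral_abs_of_hasDerivAt {u u' : ℝ → ℝ} {a b x : ℝ}
    (hu : ∀ y ∈ Icc a b, HasDerivAt u (u' y) y) (hu' : IntervalIntegrable u' volume a b)
    (ha : u a = 0) (hx : x ∈ Icc a b) : u x ≤ ∫ t in a..b, |u' t| := by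
  have hFTC : ∫ t in a..x, u' t = u x := by
    rw [integral_eq_sub_of_hasDerivAt (f := u), ha, sub_zero]
    · intro y hy
      rw [uIcc_of_le hx.1] at hy
      exact hu y ⟨hy.1, hy.2.trans hx.2⟩
    · refine hu'.mono_set ?_
      rw [uIcc_of_le hx.1, uIcc_of_le (hx.1.trans hx.2)]
      exact Icc_subset_Icc_right hx.2
  calc u x ≤ |∫ t in a..x, u' t| := hFTC ▸ le_abs_self _
    _ ≤ ∫ t in a..x, |u' t| := abs_integral_le_integral_abs hx.1
    _ ≤ ∫ t in a..b, |u' t| := integral_mono_interval le_rfl hx.1 hx.2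
        (Filter.Eventually.of_forall fun t => abs_nonneg _) hu'.abs

theorem exists_le_of_half_sq_sub_mul_add_exp_mul_le {k l : ℝ} (hk : 0 ≤ k) (hl : 0 ≤ l)
    (P : ℝ) : ∃ Q, ∀ N R I : ℝ, 0 ≤ N → 0 ≤ R →
      (1/2) * N - k * √N + (1/2) * (exp (-(l * √N)) * R) ≤ I → Q ≤ √(R + N) → P ≤ I := by
  -- Once √N ≥ n₀ the quadratic part alone exceeds P; below n₀ the exponential weight is at
  -- least m, and Q is chosen so that R is then large enough to compensate.
  set n₀ := 2 * k + |P| + 1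
  set m := exp (-(l * n₀))
  have hm : 0 < m := exp_pos _
  refine ⟨√(n₀ ^ 2 + 2 * (|P| + k ^ 2) / m), fun N R I hN hR hI hQ => ?_⟩
  rw [sqrt_le_sqrt_iff (by positivity)] at hQ
  set n := √N
  have hnN : n ^ 2 = N := sq_sqrt hN
  have hn : 0 ≤ n := sqrt_nonneg N
  have hexpR : 0 ≤ exp (-(l * n)) * R := by positivity
  have hP := le_abs_self P
  rcases le_or_gt n₀ n with hlarge | hsmall
  · nlinarith [abs_nonneg P]
  · have hmR : m * R ≤ exp (-(l * n)) * R := by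
      gcongr
      exact exp_le_exp.2 (neg_le_neg (mul_le_mul_of_nonneg_left hsmall.le hl))
    have hR' : 2 * (|P| + k ^ 2) / m ≤ R := by nlinarith
    have : 2 * (|P| + k ^ 2) ≤ m * R := by rwa [div_le_iff₀' hm] at hR'
    nlinarith [sq_nonneg (n - k)]

section memX

variable {ε : ℝ} {S T T' U U' : ℝ → ℝ}

theorem one_add_sub_sq_pos (hε : 0 < ε) {x : ℝ} (hx : x ∈ Icc (-1:ℝ) 1) : 0 < 1 + ε - x ^ 2 := by
  nlinarith [hx.1, hx.2]

theorem normUsq_nonneg (hε : 0 < ε) (U' : ℝ → ℝ) : 0 ≤ normUsq ε U' :=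
  integral_nonneg (by norm_num) fun x hx => mul_nonneg (sq_nonneg _) (one_add_sub_sq_pos hε hx).le

theorem memX.aestronglyMeasurable_deriv (h : memX S T T' U U') :
    AEStronglyMeasurable U' (volume.restrict (Ioc (-1) 1)) :=
  aestronglyMeasurable_of_hasDerivAt measurableSet_Ioc fun x hx =>
    h.2.2.2.2.2.1 x (Ioc_subset_Icc_self hx)

theorem memX.intervalIntegrable_deriv (h : memX S T T' U U') :
    IntervalIntegrable U' volume (-1) 1 :=
  .of_sq (by norm_num) h.aestronglyMeasurable_deriv h.2.2.2.2.2.2.1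

theorem memX.intervalIntegrable_normUsq (h : memX S T T' U U') :
    IntervalIntegrable (fun x => U' x ^ 2 * (1 + ε - x ^ 2)) volume (-1) 1 :=
  h.2.2.2.2.2.2.1.mul_continuousOn (by fun_prop)

theorem memX.normXsq_eq (h : memX S T T' U U') :
    normXsq ε S T' U' =
      (∫ x in (-1:ℝ)..1, S x ^ 2) + (∫ x in (-1:ℝ)..1, T' x ^ 2) + normUsq ε U' := by
  rw [normXsq, normUsq, integral_add (h.1.add h.2.2.1) h.intervalIntegrable_normUsq,
    integral_add h.1 h.2.2.1]

theorem memX.integral_mul_deriv_le (hε : 0 < ε) (h : memX S T T' U U') :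
    ∫ x in (-1:ℝ)..1, x * U' x ≤
      √(∫ x in (-1:ℝ)..1, x ^ 2 / (1 + ε - x ^ 2)) * √(normUsq ε U') := by
  rw [mul_comm, normUsq]
  simpa only [mul_comm (U' _)] using integral_mul_le_sqrt_mul_sqrt_weighted (g := fun x => x)
    (by norm_num) h.aestronglyMeasurable_deriv h.intervalIntegrable_normUsq (continuousOn_id' _)
    (by fun_prop) fun x hx => one_add_sub_sq_pos hε hx

theorem memX.apply_le_sqrt_mul_sqrt_normUsq (hε : 0 < ε) (h : memX S T T' U U') {x : ℝ}
    (hx : x ∈ Icc (-1:ℝ) 1) :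
    U x ≤ √(∫ x in (-1:ℝ)..1, 1 / (1 + ε - x ^ 2)) * √(normUsq ε U') := by
  have hCS := integral_mul_le_sqrt_mul_sqrt_weighted (g := fun _ => 1) (w := fun x => 1 + ε - x ^ 2)
    (by norm_num : (-1:ℝ) ≤ 1) h.aestronglyMeasurable_deriv.norm
    (by simpa only [Real.norm_eq_abs, sq_abs] using h.intervalIntegrable_normUsq)
    continuousOn_const (by fun_prop) fun x hx => one_add_sub_sq_pos hε hx
  simp only [Real.norm_eq_abs, sq_abs, mul_one, one_pow] at hCS
  rw [mul_comm]
  exact (le_integral_abs_of_hasDerivAt h.2.2.2.2.2.1 h.intervalIntegrable_deriv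
    h.2.2.2.2.2.2.2.1 hx).trans hCS

theorem memX.continuousOn (h : memX S T T' U U') : ContinuousOn U (Icc (-1) 1) :=
  fun x hx => (h.2.2.2.2.2.1 x hx).continuousAt.continuousWithinAt

theorem memX.intervalIntegrable_potential (h : memX S T T' U U') :
    IntervalIntegrable (fun x => (S x ^ 2 + T' x ^ 2) * exp (-2 * U x)) volume (-1) 1 := by
  refine (h.1.add h.2.2.1).mul_continuousOn ?_
  rw [uIcc_of_le (by norm_num)]
  exact (continuousOn_const.mul h.continuousOn).rexp

theorem memX.exp_mul_le_integral (hε : 0 < ε) (h : memX S T T' U U') :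
    exp (-(2 * √(∫ x in (-1:ℝ)..1, 1 / (1 + ε - x ^ 2)) * √(normUsq ε U'))) *
        ((∫ x in (-1:ℝ)..1, S x ^ 2) + ∫ x in (-1:ℝ)..1, T' x ^ 2) ≤
      ∫ x in (-1:ℝ)..1, (S x ^ 2 + T' x ^ 2) * exp (-2 * U x) := by
  rw [← integral_add h.1 h.2.2.1, ← intervalIntegral.integral_const_mul]
  refine integral_mono_on (by norm_num) ((h.1.add h.2.2.1).const_mul _)
    h.intervalIntegrable_potential fun x hx => ?_
  rw [mul_comm]
  gcongr
  linarith [h.apply_le_sqrt_mul_sqrt_normUsq hε hx]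

theorem memX.le_Ieps (hε : 0 < ε) (h : memX S T T' U U') :
    (1/2) * normUsq ε U' - √(∫ x in (-1:ℝ)..1, x ^ 2 / (1 + ε - x ^ 2)) * √(normUsq ε U') +
        (1/2) * (exp (-(2 * √(∫ x in (-1:ℝ)..1, 1 / (1 + ε - x ^ 2)) * √(normUsq ε U'))) *
          ((∫ x in (-1:ℝ)..1, S x ^ 2) + ∫ x in (-1:ℝ)..1, T' x ^ 2)) ≤
      Ieps ε S T T' U U' := by
  have hxU : IntervalIntegrable (fun x => 2 * x * U' x) volume (-1) 1 := by
    simpa only [mul_comm (U' _), mul_assoc] using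
      (h.intervalIntegrable_deriv.mul_continuousOn (continuousOn_id' _)).const_mul 2
  have hsplit : ∫ x in (-1:ℝ)..1, (U' x ^ 2 * (1 + ε - x ^ 2) - 2 * x * U' x
      + (S x ^ 2 + T' x ^ 2) * exp (-2 * U x)) =
      normUsq ε U' - 2 * (∫ x in (-1:ℝ)..1, x * U' x)
        + ∫ x in (-1:ℝ)..1, (S x ^ 2 + T' x ^ 2) * exp (-2 * U x) := by
    rw [integral_add (h.intervalIntegrable_normUsq.sub hxU) h.intervalIntegrable_potential,
      integral_sub h.intervalIntegrable_normUsq hxU, normUsq]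
    simp only [mul_assoc, intervalIntegral.integral_const_mul]
  rw [Ieps, hsplit]
  linarith [h.integral_mul_deriv_le hε, h.exp_mul_le_integral hε, sq_nonneg (M2eps ε S T U)]

end memX

/-- I_ε ≥ (1/2)‖U‖²_ε − C(ε)‖U‖_ε for a constant C(ε) > 0 independent of
(S,T,U); consequently I_ε is coercive on X. -/
theorem stmt_5 (ε : ℝ) (hε : 0 < ε) :
    (∃ C > (0:ℝ), ∀ S T T' U U' : ℝ → ℝ, memX S T T' U U' →
        Ieps ε S T T' U U' ≥
          (1/2) * normUsq ε U' - C * Real.sqrt (normUsq ε U')) ∧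
    (∀ P : ℝ, ∃ Q : ℝ, ∀ S T T' U U' : ℝ → ℝ, memX S T T' U U' →
        Real.sqrt (normXsq ε S T' U') ≥ Q → Ieps ε S T T' U U' ≥ P) := by
  set K := ∫ x in (-1:ℝ)..1, x ^ 2 / (1 + ε - x ^ 2)
  set L := ∫ x in (-1:ℝ)..1, 1 / (1 + ε - x ^ 2)
  have hR : ∀ S T' : ℝ → ℝ, 0 ≤ (∫ x in (-1:ℝ)..1, S x ^ 2) + ∫ x in (-1:ℝ)..1, T' x ^ 2 :=
    fun S T' => add_nonneg (integral_nonneg (by norm_num) fun x _ => sq_nonneg _)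
      (integral_nonneg (by norm_num) fun x _ => sq_nonneg _)
  refine ⟨⟨√K + 1, by positivity, fun S T T' U U' h => ?_⟩, fun P => ?_⟩
  · have hE : 0 ≤ exp (-(2 * √L * √(normUsq ε U'))) *
        ((∫ x in (-1:ℝ)..1, S x ^ 2) + ∫ x in (-1:ℝ)..1, T' x ^ 2) :=
      mul_nonneg (exp_pos _).le (hR S T')
    linarith [h.le_Ieps hε, sqrt_nonneg (normUsq ε U')]
  · obtain ⟨Q, hQ⟩ := exists_le_of_half_sq_sub_mul_add_exp_mul_le (sqrt_nonneg K)
      (by positivity : 0 ≤ 2 * √L) P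
    refine ⟨Q, fun S T T' U U' h hX => hQ _ _ _ (normUsq_nonneg hε U') (hR S T')
      (h.le_Ieps hε) ?_⟩
    rwa [h.normXsq_eq] at hX
end

section
/- Let U : [−1,1] → ℝ be twice continuously differentiable and let λ ∈ ℝ, γ ∈ ℝ, ε ≥ 0 be constants such that 0 = −U''(1+ε−x²) + 2xU' + 1 + γe^{2U} + 4λ(1+ε−x²)e^{4U} on (−1,1). Then the function F(x) := −(1+ε−x²)²U'² + 2x(1+ε−x²)U' + 2λ e^{4U}(1+ε−x²)² − x² + γ(1+ε−x²)e^{2U} is constant on [−1,1]. -/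
open Set

/-!
Write `w x = 1 + ε - x²`. Differentiating the first integral `F` and collecting terms gives
`F' = 2 (w U' - x) · E`, where `E` is the Euler–Lagrange expression, so `F' = 0` on `(-1, 1)`;
as `F` is continuous on `[-1, 1]`, the mean value theorem makes it constant there.
-/

lemma eqOn_Icc_of_hasDerivAt_zero {f : ℝ → ℝ} {a b : ℝ} (hcont : ContinuousOn f (Icc a b))
    (hderiv : ∀ x ∈ Ioo a b, HasDerivAt f 0 x) : ∀ x ∈ Icc a b, f x = f a := by
  rintro x ⟨hax, hxb⟩
  rcases hax.eq_or_lt with rfl | hax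
  · rfl
  obtain ⟨_, _, hslope⟩ := exists_hasDerivAt_eq_slope f (fun _ ↦ 0) hax
    (hcont.mono (Icc_subset_Icc_right hxb))
    (fun y hy ↦ hderiv y (Ioo_subset_Ioo_right hxb hy))
  have hsub : f x - f a = 0 := by
    simpa [(sub_pos.2 hax).ne'] using hslope.symm
  exact sub_eq_zero.1 hsub

section FirstIntegral

variable (ε lam γ : ℝ) (U U' U'' : ℝ → ℝ)

noncomputable def eulerLagrangeExpr (x : ℝ) : ℝ :=
  -U'' x * (1 + ε - x^2) + 2 * x * U' x + 1 + γ * Real.exp (2 * U x)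
    + 4 * lam * (1 + ε - x^2) * Real.exp (4 * U x)

noncomputable def firstIntegral (x : ℝ) : ℝ :=
  -(1 + ε - x^2)^2 * (U' x)^2 + 2 * x * (1 + ε - x^2) * U' x
    + 2 * lam * Real.exp (4 * U x) * (1 + ε - x^2)^2 - x^2
    + γ * (1 + ε - x^2) * Real.exp (2 * U x)

variable {ε lam γ U U' U''}

lemma hasDerivAt_firstIntegral {x : ℝ} (hU : HasDerivAt U (U' x) x)
    (hU' : HasDerivAt U' (U'' x) x) :
    HasDerivAt (firstIntegral ε lam γ U U')
      (2 * ((1 + ε - x^2) * U' x - x) * eulerLagrangeExpr ε lam γ U U' U'' x) x := by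
  have hw : HasDerivAt (fun y : ℝ ↦ 1 + ε - y^2) (-(2 * x)) x := by
    simpa using (hasDerivAt_pow 2 x).const_sub (1 + ε)
  have h := (((((hw.pow 2).neg.mul (hU'.pow 2)).add
    ((((hasDerivAt_id x).const_mul 2).mul hw).mul hU')).add
    ((((hU.const_mul 4).exp).const_mul (2 * lam)).mul (hw.pow 2))).sub
    (hasDerivAt_pow 2 x)).add ((hw.const_mul γ).mul ((hU.const_mul 2).exp))
  refine h.congr_deriv ?_
  simp only [eulerLagrangeExpr, id_eq, Pi.pow_apply, Pi.mul_apply, Pi.neg_apply]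
  push_cast
  ring

lemma continuousOn_firstIntegral {s : Set ℝ} (hU : ContinuousOn U s) (hU' : ContinuousOn U' s) :
    ContinuousOn (firstIntegral ε lam γ U U') s := by
  unfold firstIntegral
  fun_prop

end FirstIntegral

theorem stmt_6_general (ε lam γ : ℝ) (U U' U'' : ℝ → ℝ)
    (hU : ∀ x ∈ Icc (-1:ℝ) 1, HasDerivAt U (U' x) x)
    (hU' : ∀ x ∈ Icc (-1:ℝ) 1, HasDerivAt U' (U'' x) x)
    (hODE : ∀ x ∈ Ioo (-1:ℝ) 1,
      0 = -U'' x * (1 + ε - x^2) + 2 * x * U' x + 1 + γ * Real.exp (2 * U x)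
        + 4 * lam * (1 + ε - x^2) * Real.exp (4 * U x)) :
    ∃ c : ℝ, ∀ x ∈ Icc (-1:ℝ) 1,
      -(1 + ε - x^2)^2 * (U' x)^2 + 2 * x * (1 + ε - x^2) * U' x
        + 2 * lam * Real.exp (4 * U x) * (1 + ε - x^2)^2 - x^2
        + γ * (1 + ε - x^2) * Real.exp (2 * U x) = c := by
  refine ⟨firstIntegral ε lam γ U U' (-1), eqOn_Icc_of_hasDerivAt_zero ?_ ?_⟩
  · exact continuousOn_firstIntegral (fun x hx ↦ (hU x hx).continuousAt.continuousWithinAt)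
      (fun x hx ↦ (hU' x hx).continuousAt.continuousWithinAt)
  · intro x hx
    have h := hasDerivAt_firstIntegral (ε := ε) (lam := lam) (γ := γ)
      (hU x (Ioo_subset_Icc_self hx)) (hU' x (Ioo_subset_Icc_self hx))
    rwa [eulerLagrangeExpr, ← hODE x hx, mul_zero] at h

/-- If U is C² on [−1,1] and satisfies the Euler–Lagrange equation
0 = −U''(1+ε−x²) + 2xU' + 1 + γe^{2U} + 4λ(1+ε−x²)e^{4U} on (−1,1), then
F(x) := −(1+ε−x²)²U'² + 2x(1+ε−x²)U' + 2λe^{4U}(1+ε−x²)² − x² + γ(1+ε−x²)e^{2U}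
is constant on [−1,1]. -/
theorem stmt_6 (ε lam γ : ℝ) (hε : 0 ≤ ε) (U U' U'' : ℝ → ℝ)
    (hU : ∀ x ∈ Icc (-1:ℝ) 1, HasDerivAt U (U' x) x)
    (hU' : ∀ x ∈ Icc (-1:ℝ) 1, HasDerivAt U' (U'' x) x)
    (hODE : ∀ x ∈ Ioo (-1:ℝ) 1,
      0 = -U'' x * (1 + ε - x^2) + 2 * x * U' x + 1 + γ * Real.exp (2 * U x)
        + 4 * lam * (1 + ε - x^2) * Real.exp (4 * U x)) :
    ∃ c : ℝ, ∀ x ∈ Icc (-1:ℝ) 1,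
      -(1 + ε - x^2)^2 * (U' x)^2 + 2 * x * (1 + ε - x^2) * U' x
        + 2 * lam * Real.exp (4 * U x) * (1 + ε - x^2)^2 - x^2
        + γ * (1 + ε - x^2) * Real.exp (2 * U x) = c :=
  stmt_6_general ε lam γ U U' U'' hU hU' hODE
end

section
/- Let γ ∈ [−1, 0] and define U(x) := (1/2) ln( 2/((1+γ)x² + 1−γ) ) on [−1,1]. Then U(±1) = 0, U is smooth, and U satisfies the degenerate Euler–Lagrange equation −U''(1−x²) + 2xU' + 1 + γe^{2U} + 4λ₁(1−x²)e^{4U} = 0 on (−1,1) with λ₁ = (γ² − 1)/8. -/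
open Real Set

/-- For γ ∈ [−1,0], U(x) := (1/2)ln(2/((1+γ)x²+1−γ)) satisfies
U(±1) = 0, is smooth, and solves the degenerate Euler–Lagrange equation
−U''(1−x²) + 2xU' + 1 + γe^{2U} + 4λ₁(1−x²)e^{4U} = 0 on (−1,1) with λ₁ = (γ²−1)/8. -/
theorem stmt_16 (γ : ℝ) (hγ : γ ∈ Icc (-1:ℝ) 0) (U : ℝ → ℝ)
    (hU : U = fun x => (1/2) * Real.log (2 / ((1 + γ) * x^2 + 1 - γ))) :
    U 1 = 0 ∧ U (-1) = 0 ∧ ContDiff ℝ (⊤ : ℕ∞) U ∧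
    (∀ x ∈ Ioo (-1:ℝ) 1,
      -(deriv (deriv U) x) * (1 - x^2) + 2 * x * deriv U x + 1
        + γ * Real.exp (2 * U x)
        + 4 * ((γ^2 - 1) / 8) * (1 - x^2) * Real.exp (4 * U x) = 0) := by
  obtain ⟨hγ1, hγ2⟩ := hγ
  set g : ℝ → ℝ := fun x => (1 + γ) * x^2 + 1 - γ with hg
  have hD : ∀ x : ℝ, 0 < g x := by
    intro x
    have h1 : 0 ≤ (1 + γ) * x^2 := mul_nonneg (by linarith) (sq_nonneg x)
    have : (0:ℝ) < 1 - γ := by linarith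
    simp only [hg]; linarith
  have hDne : ∀ x : ℝ, g x ≠ 0 := fun x => (hD x).ne'
  have hU1 : U 1 = 0 := by
    rw [hU]
    show (1/2) * Real.log (2 / ((1 + γ) * 1^2 + 1 - γ)) = 0
    rw [show (1 + γ) * (1:ℝ)^2 + 1 - γ = 2 by ring]
    norm_num
  have hUm1 : U (-1) = 0 := by
    rw [hU]
    show (1/2) * Real.log (2 / ((1 + γ) * (-1)^2 + 1 - γ)) = 0
    rw [show (1 + γ) * (-1:ℝ)^2 + 1 - γ = 2 by ring]
    norm_num
  have hgder : ∀ x : ℝ, HasDerivAt g ((1 + γ) * (2 * x)) x := by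
    intro x
    rw [hg]
    exact ((((hasDerivAt_pow 2 x).const_mul (1 + γ)).add_const 1).sub_const γ).congr_deriv (by norm_num)
  -- rewrite U
  have hUV : U = fun x => (1/2) * Real.log 2 - (1/2) * Real.log (g x) := by
    funext x
    simp only [hU, hg]
    rw [Real.log_div (by norm_num) (hDne x)]
    ring
  have hU' : ∀ x : ℝ, HasDerivAt U (-((1 + γ) * x) / g x) x := by
    intro x
    rw [hUV]
    have h1 : HasDerivAt (fun x => Real.log (g x)) ((1 + γ) * (2 * x) / g x) x :=
      (hgder x).log (hDne x)
    have := (h1.const_mul (1/2)).const_sub ((1/2) * Real.log 2)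
    exact this.congr_deriv (by ring)
  have hderivU : deriv U = fun x => -((1 + γ) * x) / g x := by
    funext x; exact (hU' x).deriv
  have hU'' : ∀ x : ℝ, HasDerivAt (deriv U)
      ((-(1 + γ) * g x - (-((1 + γ) * x)) * ((1 + γ) * (2 * x))) / (g x)^2) x := by
    intro x
    rw [hderivU]
    have hn : HasDerivAt (fun x : ℝ => -((1 + γ) * x)) (-(1 + γ)) x := by
      exact ((hasDerivAt_id x).const_mul (1 + γ)).neg.congr_deriv (by ring)
    exact hn.div (hgder x) (hDne x)
  have hsmooth : ContDiff ℝ (⊤ : ℕ∞) U := by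
    rw [hUV]
    have hgC : ContDiff ℝ (⊤ : ℕ∞) g := by
      apply ContDiff.sub
      · exact ((contDiff_const.mul (contDiff_id.pow 2)).add contDiff_const)
      · exact contDiff_const
    exact contDiff_const.sub (contDiff_const.mul (hgC.log hDne))
  refine ⟨hU1, hUm1, hsmooth, ?_⟩
  intro x hx
  have hexp2 : Real.exp (2 * U x) = 2 / g x := by
    rw [hU]
    simp only
    rw [show 2 * ((1/2) * Real.log (2 / ((1 + γ) * x^2 + 1 - γ)))
        = Real.log (2 / g x) by simp [hg]]
    exact Real.exp_log (div_pos (by norm_num) (hD x))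
  have hexp4 : Real.exp (4 * U x) = (2 / g x) * (2 / g x) := by
    rw [show (4:ℝ) * U x = 2 * U x + 2 * U x by ring, Real.exp_add, hexp2]
  rw [(hU'' x).deriv, hderivU, hexp2, hexp4]
  have hne : ((1 + γ) * x^2 + 1 - γ) ≠ 0 := hDne x
  simp only [hg]
  field_simp
  ring
end

section
/- Let γ ∈ [−1, 0], U(x) := (1/2)ln(2/((1+γ)x² + 1−γ)), T(x) := √(−γ(1−γ²))·(1−x²)/(1−γ + (1+γ)x²), and S(x) := −[(−γ)^{3/2} + √(1−γ²)·|T(x)|]·e^{2U(x)}. Then ∫_{-1}^1 e^{4U(x)}(1−x²) dx, ∫_{-1}^1 S T dx, and (1/√2)∫_{-1}^1 S dx are all finite, T(±1) = 0, and the functional I[S,T,U] := (1/2)∫_{-1}^1 [U'²(1−x²) − 2xU' + (S²+T'²)e^{-2U}] dx + M₂²/2 (with c₁,c₂,c₃,M₁,M₂ defined from S,T,U as in the paper with ε = 0) satisfies I[S,T,U] = 1. -/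
/-!
Write `D(x) = (1 + γ)x² + 1 - γ`. Then `e^{2U} = 2/D`, `T = √(-γ)√(1-γ²)(1-x²)/D` and, on `[-1,1]`,
`S = √(-γ)(2/D - 4(1-γ)/D²)`. Since `(1+γ)(1-x²) = 2 - D`, every integrand in the statement is a
polynomial in `1/D`, and differentiating `x/Dⁿ` reduces the integrals of `1/D²` and `1/D³` to
`J = ∫ 1/D`. This yields `1 - γJ` for the integral in `I`, `c₃⁴ = 4γ²`, `√(1-γ²) c₂ = γ(γ+J)` and
`(1-γ²) c₁² = 4(1+γJ)`, whence `M₂² = 1 + γJ` and `I = 1`.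
-/

open Real Set MeasureTheory intervalIntegral

section ReductionFormula

variable {a b : ℝ}

theorem hasDerivAt_div_quadratic_pow (n : ℕ) {x : ℝ} (hx : a * x ^ 2 + b ≠ 0) :
    HasDerivAt (fun y => y / (a * y ^ 2 + b) ^ n)
      (2 * n * b * ((a * x ^ 2 + b) ^ (n + 1))⁻¹ - (2 * n - 1) * ((a * x ^ 2 + b) ^ n)⁻¹) x := by
  have hq : HasDerivAt (fun y => a * y ^ 2 + b) (2 * a * x) x := by
    simpa [mul_comm, mul_left_comm, mul_assoc] using ((hasDerivAt_pow 2 x).const_mul a).add_const b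
  refine ((hasDerivAt_id x).div (hq.pow n) (pow_ne_zero n hx)).congr_deriv ?_
  rcases n with _ | m
  · simp
  · simp only [id_eq, Pi.pow_apply, add_tsub_cancel_right]
    field_simp
    push_cast
    ring

theorem integral_inv_quadratic_pow_succ (hD : ∀ x ∈ uIcc (-1 : ℝ) 1, a * x ^ 2 + b ≠ 0)
    (n : ℕ) :
    2 * n * b * ∫ x in (-1 : ℝ)..1, ((a * x ^ 2 + b) ^ (n + 1))⁻¹
      = 2 / (a + b) ^ n + (2 * n - 1) * ∫ x in (-1 : ℝ)..1, ((a * x ^ 2 + b) ^ n)⁻¹ := by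
  have hcont (k : ℕ) : ContinuousOn (fun x : ℝ => ((a * x ^ 2 + b) ^ k)⁻¹) (uIcc (-1) 1) :=
    (by fun_prop : Continuous fun x : ℝ => (a * x ^ 2 + b) ^ k).continuousOn.inv₀
      fun x hx => pow_ne_zero k (hD x hx)
  have hFTC := integral_eq_sub_of_hasDerivAt
    (fun x hx => hasDerivAt_div_quadratic_pow n (hD x hx))
    ((continuousOn_const.mul (hcont (n + 1))).sub
      (continuousOn_const.mul (hcont n))).intervalIntegrable
  rw [integral_sub ((hcont (n + 1)).intervalIntegrable.const_mul _)
    ((hcont n).intervalIntegrable.const_mul _), intervalIntegral.integral_const_mul,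
    intervalIntegral.integral_const_mul] at hFTC
  norm_num at hFTC
  linear_combination hFTC

end ReductionFormula

theorem sq_max_zero_div_eq {s c d P : ℝ} (hs : 0 ≤ s) (hc : 0 ≤ c)
    (hsc : (s * c) ^ 2 = 4 * P) (hsd : s * (s - |d|) = P) :
    (max 0 ((2 * s - 2 * |d|) / c)) ^ 2 = P := by
  rcases hs.eq_or_lt with rfl | hs
  · have hle : (2 * 0 - 2 * |d|) / c ≤ 0 :=
      div_nonpos_of_nonpos_of_nonneg (by linarith [abs_nonneg d]) hc
    rw [max_eq_left hle, ← hsd]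
    ring
  · have hnum : 2 * s - 2 * |d| = s * c ^ 2 / 2 := by
      field_simp
      nlinarith [hsc, hsd]
    have hquot : (2 * s - 2 * |d|) / c = s * c / 2 := by
      rcases eq_or_ne c 0 with rfl | hc₀
      · simp
      · rw [hnum]; field_simp
    rw [hquot, max_eq_right (by positivity)]
    linear_combination hsc / 4

namespace ExtremalHorizon

noncomputable section

def D (γ x : ℝ) : ℝ := (1 + γ) * x ^ 2 + (1 - γ)

def J (γ : ℝ) : ℝ := ∫ x in (-1 : ℝ)..1, (D γ x)⁻¹

def U (γ x : ℝ) : ℝ := (1 / 2) * Real.log (2 / ((1 + γ) * x ^ 2 + 1 - γ))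

def T (γ x : ℝ) : ℝ :=
  Real.sqrt (-γ * (1 - γ ^ 2)) * (1 - x ^ 2) / (1 - γ + (1 + γ) * x ^ 2)

def S (γ x : ℝ) : ℝ :=
  -(((-γ) ^ ((3 : ℝ) / 2)) + Real.sqrt (1 - γ ^ 2) * |T γ x|) * Real.exp (2 * U γ x)

variable {γ x : ℝ}

theorem D_pos (h₁ : -1 ≤ γ) (h₂ : γ < 1) (x : ℝ) : 0 < D γ x := by
  unfold D; nlinarith [sq_nonneg x]

theorem D_le_two (h₁ : -1 ≤ γ) (hx : x ∈ Icc (-1 : ℝ) 1) : D γ x ≤ 2 := by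
  have hx2 : x ^ 2 ≤ 1 := by nlinarith [hx.1, hx.2]
  unfold D; nlinarith [mul_le_mul_of_nonneg_left hx2 (by linarith : 0 ≤ 1 + γ)]

theorem continuous_D : Continuous (D γ) := by
  unfold D; fun_prop

theorem hasDerivAt_D (x : ℝ) : HasDerivAt (D γ) (2 * (1 + γ) * x) x :=
  (((hasDerivAt_pow 2 x).const_mul (1 + γ)).add_const (1 - γ)).congr_deriv (by push_cast; ring)

theorem integral_inv_D_sq (h₁ : -1 ≤ γ) (h₂ : γ < 1) :
    ∫ x in (-1 : ℝ)..1, (D γ x ^ 2)⁻¹ = (1 + J γ) / (2 * (1 - γ)) := by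
  have h := integral_inv_quadratic_pow_succ (fun x _ => (D_pos h₁ h₂ x).ne') 1
  norm_num at h
  unfold J D
  rw [eq_div_iff (by linarith)]
  linarith

theorem integral_inv_D_cube (h₁ : -1 ≤ γ) (h₂ : γ < 1) :
    ∫ x in (-1 : ℝ)..1, (D γ x ^ 3)⁻¹ = (1 - γ + 3 * (1 + J γ)) / (8 * (1 - γ) ^ 2) := by
  have h := integral_inv_quadratic_pow_succ (fun x _ => (D_pos h₁ h₂ x).ne') 2
  rw [show (1 + γ) + (1 - γ) = 2 by ring] at h
  change _ * ∫ x in (-1 : ℝ)..1, (D γ x ^ (2 + 1))⁻¹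
    = _ + _ * ∫ x in (-1 : ℝ)..1, (D γ x ^ 2)⁻¹ at h
  rw [integral_inv_D_sq h₁ h₂] at h
  generalize ∫ x in (-1 : ℝ)..1, (D γ x ^ (2 + 1))⁻¹ = I at h ⊢
  have : 1 - γ ≠ 0 := by linarith
  field_simp at h ⊢
  linear_combination h

theorem one_le_J (h₁ : -1 ≤ γ) (h₂ : γ < 1) : 1 ≤ J γ := by
  have hmono : ∫ x in (-1 : ℝ)..1, (2 : ℝ)⁻¹ ≤ J γ := by
    refine integral_mono_on (by norm_num) intervalIntegrable_const
      ((continuous_D.inv₀ fun x => (D_pos h₁ h₂ x).ne').intervalIntegrable _ _) fun x hx => ?_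
    exact inv_anti₀ (D_pos h₁ h₂ x) (D_le_two h₁ hx)
  norm_num at hmono
  exact hmono

theorem integral_eq_of_D_expansion (h₁ : -1 ≤ γ) (h₂ : γ < 1) {f : ℝ → ℝ} (p₀ p₁ p₂ p₃ : ℝ)
    (hf : ∀ x ∈ Icc (-1 : ℝ) 1, f x = p₀ + p₁ / D γ x + p₂ / D γ x ^ 2 + p₃ / D γ x ^ 3) :
    ∫ x in (-1 : ℝ)..1, f x
      = 2 * p₀ + p₁ * J γ + p₂ * ((1 + J γ) / (2 * (1 - γ)))
        + p₃ * ((1 - γ + 3 * (1 + J γ)) / (8 * (1 - γ) ^ 2)) := by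
  have hcont (n : ℕ) : Continuous fun x => (D γ x ^ n)⁻¹ :=
    (continuous_D.pow n).inv₀ fun x => pow_ne_zero n (D_pos h₁ h₂ x).ne'
  have hint (n : ℕ) (p : ℝ) : IntervalIntegrable (fun x => p * (D γ x ^ n)⁻¹) volume (-1) 1 :=
    ((hcont n).const_mul p).intervalIntegrable _ _
  have hexp : (fun x => p₀ + p₁ / D γ x + p₂ / D γ x ^ 2 + p₃ / D γ x ^ 3)
      = fun x => p₀ * (D γ x ^ 0)⁻¹ + p₁ * (D γ x ^ 1)⁻¹ + p₂ * (D γ x ^ 2)⁻¹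
        + p₃ * (D γ x ^ 3)⁻¹ := by
    funext x; simp [div_eq_mul_inv]
  rw [integral_congr fun x hx => hf x (by rwa [uIcc_of_le (by norm_num)] at hx), hexp,
    integral_add (((hint 0 p₀).add (hint 1 p₁)).add (hint 2 p₂)) (hint 3 p₃),
    integral_add ((hint 0 p₀).add (hint 1 p₁)) (hint 2 p₂), integral_add (hint 0 p₀) (hint 1 p₁)]
  simp only [intervalIntegral.integral_const_mul, integral_inv_D_sq h₁ h₂,
    integral_inv_D_cube h₁ h₂, pow_zero, pow_one, inv_one, intervalIntegral.integral_const]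
  unfold J
  norm_num
  ring

theorem U_eq : U γ = fun x => (1 / 2) * Real.log (2 / D γ x) := by
  funext x; unfold U D; ring_nf

theorem exp_two_mul_U (h₁ : -1 ≤ γ) (h₂ : γ < 1) (x : ℝ) :
    Real.exp (2 * U γ x) = 2 / D γ x := by
  rw [U_eq, ← mul_assoc, mul_one_div_cancel two_ne_zero, one_mul,
    Real.exp_log (div_pos two_pos (D_pos h₁ h₂ x))]

theorem continuous_U (h₁ : -1 ≤ γ) (h₂ : γ < 1) : Continuous (U γ) := by
  rw [U_eq]
  exact continuous_const.mul ((continuous_const.div continuous_D fun x => (D_pos h₁ h₂ x).ne').log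
    fun x => (div_pos two_pos (D_pos h₁ h₂ x)).ne')

theorem hasDerivAt_U (h₁ : -1 ≤ γ) (h₂ : γ < 1) (x : ℝ) :
    HasDerivAt (U γ) (-(1 + γ) * x / D γ x) x := by
  have hD := (D_pos h₁ h₂ x).ne'
  rw [U_eq]
  refine ((((hasDerivAt_const x 2).div (hasDerivAt_D x) hD).log
    (div_pos two_pos (D_pos h₁ h₂ x)).ne').const_mul (1 / 2)).congr_deriv ?_
  simp only [Pi.div_apply]
  field_simp
  ring

theorem T_eq (hγ : γ ≤ 0) :
    T γ = fun x => √(-γ) * √(1 - γ ^ 2) * ((1 - x ^ 2) / D γ x) := by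
  funext x; unfold T D; rw [Real.sqrt_mul (neg_nonneg.2 hγ)]; ring_nf

theorem T_nonneg (hγ : γ ≤ 0) (hD : 0 < D γ x) (hx : x ∈ Icc (-1 : ℝ) 1) : 0 ≤ T γ x := by
  have : 0 ≤ 1 - x ^ 2 := by nlinarith [hx.1, hx.2]
  rw [T_eq hγ]; positivity

theorem continuous_T (h₁ : -1 ≤ γ) (hγ : γ ≤ 0) : Continuous (T γ) := by
  rw [T_eq hγ]
  exact continuous_const.mul ((by fun_prop : Continuous fun x : ℝ => 1 - x ^ 2).div continuous_D
    fun x => (D_pos h₁ (by linarith) x).ne')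

theorem hasDerivAt_T (h₁ : -1 ≤ γ) (hγ : γ ≤ 0) (x : ℝ) :
    HasDerivAt (T γ) (√(-γ) * √(1 - γ ^ 2) * (-4 * x / D γ x ^ 2)) x := by
  have hD := (D_pos h₁ (by linarith) x).ne'
  rw [T_eq hγ]
  refine ((((hasDerivAt_const x 1).sub (hasDerivAt_pow 2 x)).div (hasDerivAt_D x) hD).const_mul
    _).congr_deriv ?_
  simp only [Pi.sub_apply]
  field_simp
  unfold D
  ring

theorem S_eq (h₁ : -1 ≤ γ) (hγ : γ ≤ 0) (hx : x ∈ Icc (-1 : ℝ) 1) :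
    S γ x = √(-γ) * (2 / D γ x - 4 * (1 - γ) / D γ x ^ 2) := by
  have hD := D_pos h₁ (by linarith) x
  have hpow : (-γ) ^ ((3 : ℝ) / 2) = -γ * √(-γ) := by
    rw [show (3 : ℝ) / 2 = 1 + 1 / 2 by norm_num, Real.rpow_add' (neg_nonneg.2 hγ) (by norm_num),
      Real.rpow_one, ← Real.sqrt_eq_rpow]
  calc S γ x
      = -√(-γ) * (-γ + √(1 - γ ^ 2) ^ 2 * (1 - x ^ 2) / D γ x) * (2 / D γ x) := by
        rw [S, abs_of_nonneg (T_nonneg hγ hD hx), exp_two_mul_U h₁ (by linarith), hpow, T_eq hγ]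
        ring
    _ = √(-γ) * (2 / D γ x - 4 * (1 - γ) / D γ x ^ 2) := by
        rw [Real.sq_sqrt (by nlinarith)]
        field_simp
        unfold D
        ring

theorem continuous_S (h₁ : -1 ≤ γ) (hγ : γ ≤ 0) : Continuous (S γ) := by
  have hU := continuous_U h₁ (by linarith : γ < 1)
  have hT := continuous_T h₁ hγ
  unfold S
  fun_prop

theorem exp_neg_two_mul_U (h₁ : -1 ≤ γ) (h₂ : γ < 1) (x : ℝ) :
    Real.exp (-2 * U γ x) = D γ x / 2 := by
  rw [show -2 * U γ x = -(2 * U γ x) by ring, Real.exp_neg, exp_two_mul_U h₁ h₂, inv_div]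

theorem one_sub_sq_mul_exp_four_mul_U (h₁ : -1 ≤ γ) (h₂ : γ < 1) (x : ℝ) :
    (1 - γ ^ 2) * (Real.exp (4 * U γ x) * (1 - x ^ 2))
      = 8 * (1 - γ) / D γ x ^ 2 - 4 * (1 - γ) / D γ x := by
  have hD := (D_pos h₁ h₂ x).ne'
  rw [show 4 * U γ x = 2 * U γ x + 2 * U γ x by ring, Real.exp_add, exp_two_mul_U h₁ h₂]
  field_simp
  unfold D
  ring

theorem sqrt_mul_S_mul_T (h₁ : -1 ≤ γ) (hγ : γ ≤ 0) (hx : x ∈ Icc (-1 : ℝ) 1) :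
    √(1 - γ ^ 2) * (S γ x * T γ x)
      = -γ * (1 - γ) * (-2 / D γ x + 4 * (2 - γ) / D γ x ^ 2 - 8 * (1 - γ) / D γ x ^ 3) := by
  have hD := (D_pos h₁ (by linarith) x).ne'
  calc √(1 - γ ^ 2) * (S γ x * T γ x)
      = √(-γ) ^ 2 * √(1 - γ ^ 2) ^ 2
          * ((2 / D γ x - 4 * (1 - γ) / D γ x ^ 2) * ((1 - x ^ 2) / D γ x)) := by
        rw [S_eq h₁ hγ hx, T_eq hγ]
        ring
    _ = -γ * (1 - γ ^ 2) * ((2 / D γ x - 4 * (1 - γ) / D γ x ^ 2) * ((1 - x ^ 2) / D γ x)) := by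
        rw [Real.sq_sqrt (by linarith), Real.sq_sqrt (by nlinarith)]
    _ = _ := by
        field_simp
        unfold D
        ring

theorem lagrangian_eq (h₁ : -1 ≤ γ) (hγ : γ ≤ 0) (hx : x ∈ Icc (-1 : ℝ) 1) :
    (deriv (U γ) x) ^ 2 * (1 - x ^ 2) - 2 * x * deriv (U γ) x
        + ((S γ x) ^ 2 + (deriv (T γ) x) ^ 2) * Real.exp (-2 * U γ x)
      = 1 + (1 - γ) / D γ x - 2 * (1 - γ) / D γ x ^ 2 := by
  have h₂ : γ < 1 := by linarith
  have hD := (D_pos h₁ h₂ x).ne'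
  rw [(hasDerivAt_U h₁ h₂ x).deriv, (hasDerivAt_T h₁ hγ x).deriv, S_eq h₁ hγ hx,
    exp_neg_two_mul_U h₁ h₂]
  simp only [mul_pow, Real.sq_sqrt (by linarith : 0 ≤ -γ),
    Real.sq_sqrt (by nlinarith : 0 ≤ 1 - γ ^ 2)]
  field_simp
  unfold D
  ring

theorem one_sub_sq_mul_integral_exp_four_mul_U (h₁ : -1 ≤ γ) (h₂ : γ < 1) :
    (1 - γ ^ 2) * ∫ x in (-1 : ℝ)..1, Real.exp (4 * U γ x) * (1 - x ^ 2) = 4 * (1 + γ * J γ) := by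
  rw [← intervalIntegral.integral_const_mul,
    integral_eq_of_D_expansion h₁ h₂ 0 (-4 * (1 - γ)) (8 * (1 - γ)) 0 fun x _ => by
      rw [one_sub_sq_mul_exp_four_mul_U h₁ h₂]; ring]
  field_simp [show 1 - γ ≠ 0 by linarith]
  ring

theorem integral_S (h₁ : -1 ≤ γ) (hγ : γ ≤ 0) :
    ∫ x in (-1 : ℝ)..1, S γ x = -2 * √(-γ) := by
  rw [integral_eq_of_D_expansion h₁ (by linarith) 0 (2 * √(-γ)) (-4 * √(-γ) * (1 - γ)) 0
    fun x hx => by rw [S_eq h₁ hγ hx]; ring]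
  field_simp [show 1 - γ ≠ 0 by linarith]
  ring

theorem sqrt_mul_integral_S_mul_T (h₁ : -1 ≤ γ) (hγ : γ ≤ 0) :
    √(1 - γ ^ 2) * ∫ x in (-1 : ℝ)..1, S γ x * T γ x = γ * (γ + J γ) := by
  rw [← intervalIntegral.integral_const_mul,
    integral_eq_of_D_expansion h₁ (by linarith) 0 (2 * γ * (1 - γ)) (-4 * γ * (1 - γ) * (2 - γ))
      (8 * γ * (1 - γ) ^ 2) fun x hx => by rw [sqrt_mul_S_mul_T h₁ hγ hx]; ring]
  field_simp [show 1 - γ ≠ 0 by linarith]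
  ring

theorem integral_lagrangian (h₁ : -1 ≤ γ) (hγ : γ ≤ 0) :
    ∫ x in (-1 : ℝ)..1, ((deriv (U γ) x) ^ 2 * (1 - x ^ 2) - 2 * x * deriv (U γ) x
        + ((S γ x) ^ 2 + (deriv (T γ) x) ^ 2) * Real.exp (-2 * U γ x)) = 1 - γ * J γ := by
  rw [integral_eq_of_D_expansion h₁ (by linarith) 1 (1 - γ) (-2 * (1 - γ)) 0
    fun x hx => by rw [lagrangian_eq h₁ hγ hx]; ring]
  field_simp [show 1 - γ ≠ 0 by linarith]
  ring

theorem integral_exp_four_mul_U_mul_nonneg :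
    0 ≤ ∫ x in (-1 : ℝ)..1, Real.exp (4 * U γ x) * (1 - x ^ 2) :=
  integral_nonneg (by norm_num) fun x hx =>
    mul_nonneg (Real.exp_pos _).le (by nlinarith [hx.1, hx.2])

theorem one_div_sqrt_two_mul_integral_S_pow_four (h₁ : -1 ≤ γ) (hγ : γ ≤ 0) :
    (1 / √2 * ∫ x in (-1 : ℝ)..1, S γ x) ^ 4 = 4 * γ ^ 2 := by
  rw [integral_S h₁ hγ]
  calc (1 / √2 * (-2 * √(-γ))) ^ 4 = 16 * (√(-γ) ^ 2) ^ 2 / (√2 ^ 2) ^ 2 := by ring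
    _ = 4 * γ ^ 2 := by rw [Real.sq_sqrt (by linarith), Real.sq_sqrt (by norm_num)]; ring

theorem sqrt_mul_abs_integral_S_mul_T (h₁ : -1 ≤ γ) (hγ : γ ≤ 0) :
    √(1 - γ ^ 2) * |∫ x in (-1 : ℝ)..1, S γ x * T γ x| = -(γ * (γ + J γ)) := by
  rw [← abs_of_nonneg (Real.sqrt_nonneg (1 - γ ^ 2)), ← abs_mul, sqrt_mul_integral_S_mul_T h₁ hγ,
    abs_of_nonpos (mul_nonpos_of_nonpos_of_nonneg hγ (by linarith [one_le_J h₁ (by linarith)]))]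

end

end ExtremalHorizon

/-- The explicit family (parametrized by γ ∈ [−1,0]) of degenerate
black-hole horizon data (S,T,U) has finite auxiliary integrals, satisfies T(±1) = 0,
and realizes the value I[S,T,U] = 1 of the functional I (functional of the paper
with ε = 0). -/
theorem stmt_17 (γ : ℝ) (hγ : γ ∈ Icc (-1:ℝ) 0) (U T S : ℝ → ℝ)
    (hU : U = fun x => (1/2) * Real.log (2 / ((1 + γ) * x^2 + 1 - γ)))
    (hT : T = fun x => Real.sqrt (-γ * (1 - γ^2)) * (1 - x^2) /
      (1 - γ + (1 + γ) * x^2))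
    (hS : S = fun x => -(((-γ)^((3:ℝ)/2)) + Real.sqrt (1 - γ^2) * |T x|) *
      Real.exp (2 * U x))
    (c₁ c₂ c₃ M₁ M₂ I : ℝ)
    (hc₁ : c₁ = Real.sqrt (∫ x in (-1:ℝ)..1, Real.exp (4 * U x) * (1 - x^2)))
    (hc₂ : c₂ = ∫ x in (-1:ℝ)..1, S x * T x)
    (hc₃ : c₃ = (1 / Real.sqrt 2) * ∫ x in (-1:ℝ)..1, S x)
    (hM₁ : M₁ = max 0 (4 - c₃^4))
    (hM₂ : M₂ = max 0 ((Real.sqrt M₁ - 2 * |c₂|) / c₁))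
    (hI : I = (1/2) * (∫ x in (-1:ℝ)..1,
        ((deriv U x)^2 * (1 - x^2) - 2 * x * deriv U x
          + ((S x)^2 + (deriv T x)^2) * Real.exp (-2 * U x))) + M₂^2 / 2) :
    IntervalIntegrable (fun x => Real.exp (4 * U x) * (1 - x^2)) volume (-1) 1 ∧
    IntervalIntegrable (fun x => S x * T x) volume (-1) 1 ∧
    IntervalIntegrable S volume (-1) 1 ∧
    T (-1) = 0 ∧ T 1 = 0 ∧
    I = 1 := by
  obtain rfl : U = ExtremalHorizon.U γ := hU
  obtain rfl : T = ExtremalHorizon.T γ := hT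
  obtain rfl : S = ExtremalHorizon.S γ := hS
  obtain ⟨h₁, hγ₀⟩ := hγ
  have h₂ : γ < 1 := by linarith
  have hs : √(1 - γ ^ 2) ^ 2 = 1 - γ ^ 2 := Real.sq_sqrt (by nlinarith)
  have hM₁' : √M₁ = 2 * √(1 - γ ^ 2) := by
    rw [hM₁, hc₃, ExtremalHorizon.one_div_sqrt_two_mul_integral_S_pow_four h₁ hγ₀,
      max_eq_right (by nlinarith), show 4 - 4 * γ ^ 2 = (2 * √(1 - γ ^ 2)) ^ 2 by
        rw [mul_pow, hs]; ring, Real.sqrt_sq (by positivity)]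
  have hM₂' : M₂ ^ 2 = 1 + γ * ExtremalHorizon.J γ := by
    rw [hM₂, hM₁']
    refine sq_max_zero_div_eq (Real.sqrt_nonneg _) (hc₁ ▸ Real.sqrt_nonneg _) ?_ ?_
    · rw [hc₁, mul_pow, hs, Real.sq_sqrt ExtremalHorizon.integral_exp_four_mul_U_mul_nonneg,
        ExtremalHorizon.one_sub_sq_mul_integral_exp_four_mul_U h₁ h₂]
    · rw [hc₂]
      linear_combination hs - ExtremalHorizon.sqrt_mul_abs_integral_S_mul_T h₁ hγ₀
  have hUc := ExtremalHorizon.continuous_U h₁ h₂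
  have hTc := ExtremalHorizon.continuous_T h₁ hγ₀
  have hSc := ExtremalHorizon.continuous_S h₁ hγ₀
  refine ⟨(by fun_prop : Continuous _).intervalIntegrable _ _,
    (hSc.mul hTc).intervalIntegrable _ _, hSc.intervalIntegrable _ _,
    by simp [ExtremalHorizon.T], by simp [ExtremalHorizon.T], ?_⟩
  rw [hI, ExtremalHorizon.integral_lagrangian h₁ hγ₀, hM₂']
  ring
end

section
/- Let γ ∈ [−1,0] and U(x) := (1/2)ln(2/((1+γ)x² + 1−γ)). Then the quantity −(1−x²)²U'(x)² + 2x(1−x²)U'(x) + 2λ₁e^{4U(x)}(1−x²)² − x² + γ(1−x²)e^{2U(x)} equals −1 for all x ∈ (−1,1), where λ₁ = (γ²−1)/8. -/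
open Real Set

/-!
With `D(x) = (1+γ)x² + 1 - γ` we have `e^{2U} = 2/D` and `U' = -(1+γ)x/D`, so after multiplying
by `D²` the first integral becomes a polynomial identity in `x` and `γ`. The term in `λ₁`
contributes `8λ₁(1-x²)² = -(1+γ)(1-γ)(1-x²)²`, which is what makes the constant terms agree.
-/

lemma quadratic_pos_of_mem_Ico {γ : ℝ} (hγ : γ ∈ Ico (-1 : ℝ) 1) (x : ℝ) :
    0 < (1 + γ) * x ^ 2 + 1 - γ := by
  nlinarith [hγ.1, hγ.2, sq_nonneg x]

lemma HasDerivAt.half_log_two_div {f : ℝ → ℝ} {f' x : ℝ} (hf : HasDerivAt f f' x)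
    (hx : f x ≠ 0) :
    HasDerivAt (fun y => 1 / 2 * Real.log (2 / f y)) (-f' / (2 * f x)) x := by
  have h := ((hasDerivAt_const x (2 : ℝ)).fun_div hf hx).log (div_ne_zero two_ne_zero hx)
  refine (h.const_mul (1 / 2)).congr_deriv ?_
  field_simp
  ring

lemma exp_mul_half_log {a : ℝ} (ha : 0 < a) (n : ℕ) :
    Real.exp (2 * n * (1 / 2 * Real.log a)) = a ^ n := by
  rw [show 2 * (n : ℝ) * (1 / 2 * Real.log a) = n * Real.log a by ring,
    Real.exp_nat_mul, Real.exp_log ha]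

lemma first_integral_eq_neg_one {γ x D : ℝ} (hD : D = (1 + γ) * x ^ 2 + 1 - γ) (hD0 : D ≠ 0) :
    -(1 - x ^ 2) ^ 2 * (-(1 + γ) * x / D) ^ 2 + 2 * x * (1 - x ^ 2) * (-(1 + γ) * x / D)
      + 2 * ((γ ^ 2 - 1) / 8) * (2 / D) ^ 2 * (1 - x ^ 2) ^ 2 - x ^ 2
      + γ * (1 - x ^ 2) * (2 / D) = -1 := by
  field_simp
  subst hD
  ring

/-- For γ ∈ [−1,0] and U(x) := (1/2)ln(2/((1+γ)x²+1−γ)), the first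
integral −(1−x²)²U'² + 2x(1−x²)U' + 2λ₁e^{4U}(1−x²)² − x² + γ(1−x²)e^{2U}
equals −1 on (−1,1), where λ₁ = (γ²−1)/8. -/
theorem stmt_18 (γ : ℝ) (hγ : γ ∈ Icc (-1:ℝ) 0) (U : ℝ → ℝ)
    (hU : U = fun x => (1/2) * Real.log (2 / ((1 + γ) * x^2 + 1 - γ)))
    (lam₁ : ℝ) (hlam₁ : lam₁ = (γ^2 - 1) / 8) :
    ∀ x ∈ Ioo (-1:ℝ) 1,
      -(1 - x^2)^2 * (deriv U x)^2 + 2 * x * (1 - x^2) * deriv U x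
        + 2 * lam₁ * Real.exp (4 * U x) * (1 - x^2)^2 - x^2
        + γ * (1 - x^2) * Real.exp (2 * U x) = -1 := by
  intro x _
  subst hU hlam₁
  have hD := quadratic_pos_of_mem_Ico ⟨hγ.1, by linarith [hγ.2]⟩ x
  have hderiv : deriv (fun y => 1 / 2 * Real.log (2 / ((1 + γ) * y ^ 2 + 1 - γ))) x
      = -(1 + γ) * x / ((1 + γ) * x ^ 2 + 1 - γ) := by
    have hq : HasDerivAt (fun y => (1 + γ) * y ^ 2 + 1 - γ) ((1 + γ) * (2 * x)) x := by
      simpa using (((hasDerivAt_pow 2 x).const_mul (1 + γ)).add_const 1).sub_const γ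
    rw [(hq.half_log_two_div hD.ne').deriv]
    field_simp
  have he2 := exp_mul_half_log (div_pos two_pos hD) 1
  have he4 := exp_mul_half_log (div_pos two_pos hD) 2
  norm_num at he2 he4
  rw [hderiv, he2, he4]
  exact first_integral_eq_neg_one rfl hD.ne'
end
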